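/- arXiv:1907.13571 — 5 statements merged into one kernel-verified Lean document; each statement's English description precedes it below -/
import Mathlib

section
/- Interior H^2 estimate for the discrete Laplacian: if v, f ∈ C_0(□_m) satisfy −Δ v = f in int(□_m) (where Δ is the discrete Laplacian Δv(x) = ∑_{y~x}(v(y)−v(x))), then ∑_{i,j=1}^d ∑_{x ∈ int(□_m)} (D_{e_i}^* D_{e_j} v(x))^2 ≤ d · ∑_{x ∈ int(□_m)} f(x)^2. -/
/-- The `j`-th canonical basis vector of `ℤ^d`. -/
def latUnit (d : ℕ) (j : Fin d) : Fin d → ℤ := fun i => if i = j then 1 else 0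

/-- The discrete triadic cube `□_m = ℤ^d ∩ (−3^m/2, 3^m/2)^d`. -/
noncomputable def triCube (d m : ℕ) : Finset (Fin d → ℤ) :=
  Finset.Icc (fun _ => -((3^m - 1) / 2 : ℤ)) (fun _ => ((3^m - 1) / 2 : ℤ))

/-- The interior of the cube. -/
noncomputable def triCubeInt (d m : ℕ) : Finset (Fin d → ℤ) :=
  (triCube d m).filter
    (fun x => ∀ j : Fin d, x + latUnit d j ∈ triCube d m ∧ x - latUnit d j ∈ triCube d m)

/-- The discrete Laplacian `Δv(x) = ∑_{y~x} (v(y) − v(x))` on `ℤ^d`. -/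
def latLap (d : ℕ) (v : (Fin d → ℤ) → ℝ) (x : Fin d → ℤ) : ℝ :=
  ∑ j : Fin d, ((v (x + latUnit d j) - v x) + (v (x - latUnit d j) - v x))

/-!
Write `D_a v = Δ_[a] v` and `D_a^* v = Δ_[-a] v`. For finitely supported `v` on an abelian
group, summation by parts and the commutation of difference operators give
`∑ (D_a^* D_b v)² = ∑ (D_a^* D_a v) (D_b^* D_b v)` over the whole group. If `v` is supported in
`int □_m` and `i ≠ j`, the product `(D_i^* D_i v) (D_j^* D_j v)` vanishes outside `int □_m`, so the
interior sum of `(D_i^* D_j v)²` is at most that of `(D_i^* D_i v) (D_j^* D_j v)`; for `i = j` the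
two agree pointwise. Summing over `i, j` bounds the left-hand side by `∑ (Δ v)² = ∑ f²`.
-/

open Function Finset
open scoped fwdDiff

theorem Finset.sum_le_finsum {α M : Type*} [AddCommMonoid M] [PartialOrder M]
    [IsOrderedAddMonoid M] {F : α → M} (hF : F.HasFiniteSupport) (hF₀ : ∀ x, 0 ≤ F x)
    (s : Finset α) : ∑ x ∈ s, F x ≤ ∑ᶠ x, F x := by
  classical
  rw [finsum_eq_sum_of_support_subset F (s := s ∪ hF.toFinset)
    fun x hx => mem_union_right s (hF.mem_toFinset.2 hx)]
  exact sum_le_sum_of_subset_of_nonneg subset_union_left fun x _ _ => hF₀ x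

theorem Set.mem_Icc_of_agree_off_coords {ι α : Type*} [Preorder α] {lo hi x y z : ι → α}
    {i j : ι} (hij : i ≠ j) (hy : y ∈ Set.Icc lo hi) (hz : z ∈ Set.Icc lo hi)
    (hyx : ∀ l ≠ i, y l = x l) (hzx : ∀ l ≠ j, z l = x l) : x ∈ Set.Icc lo hi := by
  have agree : ∀ l, ∃ w ∈ Set.Icc lo hi, w l = x l := by
    intro l
    by_cases hl : l = i
    · exact ⟨z, hz, hzx l (hl ▸ hij)⟩
    · exact ⟨y, hy, hyx l hl⟩
  refine ⟨fun l => ?_, fun l => ?_⟩ <;> obtain ⟨w, hw, hwl⟩ := agree l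
  exacts [hwl ▸ hw.1 l, hwl ▸ hw.2 l]

section FiniteDifferences

variable {G R : Type*} [AddCommGroup G] [CommRing R]

theorem fwdDiff_neg_fwdDiff_apply (a b : G) (v : G → R) (x : G) :
    Δ_[-a] (Δ_[b] v) x = (v (x - a + b) - v (x - a)) - (v (x + b) - v x) := by
  simp only [fwdDiff, sub_eq_add_neg]

theorem fwdDiff_fwdDiff_comm (a b : G) (v : G → R) : Δ_[a] (Δ_[b] v) = Δ_[b] (Δ_[a] v) := by
  ext x
  simp only [fwdDiff, add_right_comm x a b]
  ring

theorem Function.HasFiniteSupport.fwdDiff {v : G → R} (hv : v.HasFiniteSupport) (h : G) :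
    (Δ_[h] v).HasFiniteSupport :=
  (hv.fun_comp_of_injective (add_left_injective h)).sub hv

theorem finsum_fwdDiff_mul (g : G → R) {w : G → R} (hw : w.HasFiniteSupport) (h : G) :
    ∑ᶠ x, Δ_[h] g x * w x = ∑ᶠ x, g x * Δ_[-h] w x := by
  have shift : ∑ᶠ x, g (x + h) * w x = ∑ᶠ x, g x * w (x + -h) := by
    simpa using (finsum_comp_equiv (Equiv.addRight (-h)) (f := fun x => g (x + h) * w x)).symm
  simp only [fwdDiff, sub_mul, mul_sub]
  rw [finsum_sub_distrib (hw.fun_mul_right _) (hw.fun_mul_right _),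
    finsum_sub_distrib ((hw.fun_comp_of_injective (add_left_injective (-h))).fun_mul_right _)
      (hw.fun_mul_right _), shift]

theorem finsum_sq_fwdDiff_neg_fwdDiff {v : G → R} (hv : v.HasFiniteSupport) (a b : G) :
    ∑ᶠ x, Δ_[-a] (Δ_[b] v) x ^ 2 = ∑ᶠ x, Δ_[-a] (Δ_[a] v) x * Δ_[-b] (Δ_[b] v) x := by
  calc ∑ᶠ x, Δ_[-a] (Δ_[b] v) x ^ 2
      = ∑ᶠ x, Δ_[-a] (Δ_[b] v) x * Δ_[-a] (Δ_[b] v) x := by simp only [sq]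
    _ = ∑ᶠ x, Δ_[b] v x * Δ_[a] (Δ_[-a] (Δ_[b] v)) x := by
        rw [finsum_fwdDiff_mul _ ((hv.fwdDiff b).fwdDiff (-a)), neg_neg]
    _ = ∑ᶠ x, Δ_[b] v x * Δ_[b] (Δ_[-a] (Δ_[a] v)) x := by
        rw [fwdDiff_fwdDiff_comm (-a) b, fwdDiff_fwdDiff_comm a b, fwdDiff_fwdDiff_comm a (-a)]
    _ = ∑ᶠ x, Δ_[-b] (Δ_[b] v) x * Δ_[-a] (Δ_[a] v) x := by
        rw [finsum_fwdDiff_mul _ ((hv.fwdDiff a).fwdDiff (-a)), neg_neg]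
    _ = ∑ᶠ x, Δ_[-a] (Δ_[a] v) x * Δ_[-b] (Δ_[b] v) x := by simp only [mul_comm]

theorem exists_add_zsmul_mem_of_fwdDiff_neg_fwdDiff_ne_zero {S : Set G} {v : G → R}
    (hv : support v ⊆ S) {a x : G} (h : Δ_[-a] (Δ_[a] v) x ≠ 0) : ∃ n : ℤ, x + n • a ∈ S := by
  by_contra! hS
  have hvanish (n : ℤ) : v (x + n • a) = 0 := notMem_support.1 fun hn => hS n (hv hn)
  have h0 := hvanish 0
  have h1 := hvanish 1
  have hm := hvanish (-1)
  simp only [zero_smul, add_zero, one_smul, neg_smul] at h0 h1 hm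
  simp [fwdDiff, h0, h1, hm] at h

end FiniteDifferences

section Cube

variable {d m : ℕ}

theorem triCubeInt_eq_Icc :
    triCubeInt d m = Icc (fun _ => -((3 ^ m - 1) / 2 : ℤ) + 1) (fun _ => (3 ^ m - 1) / 2 - 1) := by
  ext x
  simp only [triCubeInt, triCube, mem_filter, mem_Icc, Pi.le_def, Pi.add_apply, Pi.sub_apply,
    latUnit]
  constructor
  · rintro ⟨-, h⟩
    exact ⟨fun l => by simpa using (h l).2.1 l, fun l => by simpa using (h l).1.2 l⟩
  · rintro ⟨hlo, hhi⟩
    refine ⟨⟨fun l => by linarith [hlo l], fun l => by linarith [hhi l]⟩, fun j => ?_⟩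
    refine ⟨⟨fun l => ?_, fun l => ?_⟩, ⟨fun l => ?_, fun l => ?_⟩⟩ <;>
      split_ifs <;> linarith [hlo l, hhi l]

theorem sum_fwdDiff_neg_fwdDiff_latUnit (v : (Fin d → ℤ) → ℝ) (x : Fin d → ℤ) :
    ∑ i, Δ_[-latUnit d i] (Δ_[latUnit d i] v) x = -latLap d v x := by
  rw [latLap, ← sum_neg_distrib]
  refine sum_congr rfl fun i _ => ?_
  rw [fwdDiff_neg_fwdDiff_apply, sub_add_cancel]
  ring

theorem mem_triCubeInt_of_mul_ne_zero {v : (Fin d → ℤ) → ℝ} (hv : support v ⊆ triCubeInt d m)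
    {i j : Fin d} (hij : i ≠ j) {x : Fin d → ℤ}
    (h : Δ_[-latUnit d i] (Δ_[latUnit d i] v) x * Δ_[-latUnit d j] (Δ_[latUnit d j] v) x ≠ 0) :
    x ∈ triCubeInt d m := by
  obtain ⟨n, hn⟩ := exists_add_zsmul_mem_of_fwdDiff_neg_fwdDiff_ne_zero hv (left_ne_zero_of_mul h)
  obtain ⟨k, hk⟩ := exists_add_zsmul_mem_of_fwdDiff_neg_fwdDiff_ne_zero hv (right_ne_zero_of_mul h)
  rw [triCubeInt_eq_Icc, coe_Icc] at hn hk
  rw [triCubeInt_eq_Icc, ← mem_coe, coe_Icc]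
  exact Set.mem_Icc_of_agree_off_coords hij hn hk (fun l hl => by simp [latUnit, hl])
    (fun l hl => by simp [latUnit, hl])

theorem sum_triCubeInt_sq_mixed_le {v : (Fin d → ℤ) → ℝ} (hv : support v ⊆ triCubeInt d m)
    (i j : Fin d) :
    ∑ x ∈ triCubeInt d m, Δ_[-latUnit d i] (Δ_[latUnit d j] v) x ^ 2 ≤
      ∑ x ∈ triCubeInt d m,
        Δ_[-latUnit d i] (Δ_[latUnit d i] v) x * Δ_[-latUnit d j] (Δ_[latUnit d j] v) x := by
  obtain rfl | hij := eq_or_ne i j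
  · simp only [sq, le_refl]
  have hfin : v.HasFiniteSupport := (triCubeInt d m).finite_toSet.subset hv
  calc ∑ x ∈ triCubeInt d m, Δ_[-latUnit d i] (Δ_[latUnit d j] v) x ^ 2
      ≤ ∑ᶠ x, Δ_[-latUnit d i] (Δ_[latUnit d j] v) x ^ 2 :=
        sum_le_finsum (((hfin.fwdDiff _).fwdDiff _).subset (support_pow _ two_ne_zero).le)
          (fun x => sq_nonneg _) _
    _ = ∑ᶠ x, Δ_[-latUnit d i] (Δ_[latUnit d i] v) x * Δ_[-latUnit d j] (Δ_[latUnit d j] v) x :=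
        finsum_sq_fwdDiff_neg_fwdDiff hfin _ _
    _ = _ := finsum_eq_sum_of_support_subset _ fun x hx => mem_triCubeInt_of_mul_ne_zero hv hij hx

theorem sum_sq_mixed_le_sum_sq_latLap {v : (Fin d → ℤ) → ℝ} (hv : support v ⊆ triCubeInt d m) :
    ∑ i, ∑ j, ∑ x ∈ triCubeInt d m, Δ_[-latUnit d i] (Δ_[latUnit d j] v) x ^ 2 ≤
      ∑ x ∈ triCubeInt d m, latLap d v x ^ 2 := by
  calc ∑ i, ∑ j, ∑ x ∈ triCubeInt d m, Δ_[-latUnit d i] (Δ_[latUnit d j] v) x ^ 2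
      ≤ ∑ i, ∑ j, ∑ x ∈ triCubeInt d m,
          Δ_[-latUnit d i] (Δ_[latUnit d i] v) x * Δ_[-latUnit d j] (Δ_[latUnit d j] v) x :=
        sum_le_sum fun i _ => sum_le_sum fun j _ => sum_triCubeInt_sq_mixed_le hv i j
    _ = ∑ i, ∑ x ∈ triCubeInt d m, ∑ j,
          Δ_[-latUnit d i] (Δ_[latUnit d i] v) x * Δ_[-latUnit d j] (Δ_[latUnit d j] v) x :=
        sum_congr rfl fun i _ => sum_comm
    _ = ∑ x ∈ triCubeInt d m, ∑ i, ∑ j,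
          Δ_[-latUnit d i] (Δ_[latUnit d i] v) x * Δ_[-latUnit d j] (Δ_[latUnit d j] v) x :=
        sum_comm
    _ = ∑ x ∈ triCubeInt d m, latLap d v x ^ 2 := sum_congr rfl fun x _ => by
        rw [← sum_mul_sum, sum_fwdDiff_neg_fwdDiff_latUnit, neg_mul_neg, sq]

end Cube

theorem discrete_H2_interior_general (d m : ℕ) (v f : (Fin d → ℤ) → ℝ)
    (hv0 : ∀ x, x ∉ triCubeInt d m → v x = 0)
    (heq : ∀ x ∈ triCubeInt d m, -(latLap d v x) = f x) :
    ∑ i : Fin d, ∑ j : Fin d, ∑ x ∈ triCubeInt d m,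
        ((v (x - latUnit d i + latUnit d j) - v (x - latUnit d i))
          - (v (x + latUnit d j) - v x))^2
      ≤ d * ∑ x ∈ triCubeInt d m, (f x)^2 := by
  obtain rfl | hd := Nat.eq_zero_or_pos d
  · simp
  simp only [← fwdDiff_neg_fwdDiff_apply]
  calc _ ≤ ∑ x ∈ triCubeInt d m, latLap d v x ^ 2 :=
        sum_sq_mixed_le_sum_sq_latLap (support_subset_iff'.2 hv0)
    _ = ∑ x ∈ triCubeInt d m, f x ^ 2 :=
        sum_congr rfl fun x hx => by rw [← heq x hx, neg_sq]
    _ ≤ d * ∑ x ∈ triCubeInt d m, f x ^ 2 :=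
        le_mul_of_one_le_left (sum_nonneg fun x _ => sq_nonneg _) (by exact_mod_cast hd)

/-- Interior `H²` estimate for the discrete Laplacian: if `v, f ∈ C_0(□_m)` satisfy
`−Δv = f` in `int □_m`, then
`∑_{i,j} ∑_{x ∈ int □_m} (D_{e_i}^* D_{e_j} v (x))² ≤ d ∑_{x ∈ int □_m} f(x)²`. -/
theorem discrete_H2_interior (d m : ℕ) (v f : (Fin d → ℤ) → ℝ)
    (hv0 : ∀ x, x ∉ triCubeInt d m → v x = 0)
    (hf0 : ∀ x, x ∉ triCubeInt d m → f x = 0)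
    (heq : ∀ x ∈ triCubeInt d m, -(latLap d v x) = f x) :
    ∑ i : Fin d, ∑ j : Fin d, ∑ x ∈ triCubeInt d m,
        ((v (x - latUnit d i + latUnit d j) - v (x - latUnit d i))
          - (v (x + latUnit d j) - v x))^2
      ≤ d * ∑ x ∈ triCubeInt d m, (f x)^2 :=
  discrete_H2_interior_general d m v f hv0 heq
end

section
/- Discrete trace inequality: there is a constant C depending only on d such that for every u : □_m → ℝ and every 0 ≤ K ≤ 3^m/4, ∑_{x ∈ □_m, dist(x, ∂□_m) ≤ K} u(x)^2 ≤ C (K+1) (3^{−m} ‖u‖²_{L²(□_m)} + ‖u‖_{L²(□_m)} ‖∇u‖_{L²(□_m)}), where ‖∇u‖²_{L²(□_m)} = (1/2)∑_{x,y ∈ □_m, x~y}(u(y)−u(x))². -/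
open scoped Classical

/-- The boundary `∂□_m = □_m \ int □_m`. -/
noncomputable def triCubeBdry (d m : ℕ) : Finset (Fin d → ℤ) := triCube d m \ triCubeInt d m

/-!
Write `R = (3 ^ m - 1) / 2`, so that `□_m = [-R, R]^d`. A point within distance `K` of `∂□_m`
lies within `k = ⌊K⌋` of a face `{x_j = -εR}`. From such a point `x`, walk along the ray
`x, x + εe_j, …, x + Rεe_j` inside the cube: telescoping gives
`u(x)² ≤ u(x + sεe_j)² + ∑_edges |u(b)² - u(a)²|` for every `s ≤ R`, and averaging over `s`
turns the first term into `(R + 1)⁻¹ ≤ 2·3⁻ᵐ` times a sum over the ray. Summed over the slab of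
width `k + 1`, every point and every edge of the cube is visited at most `k + 1` times. Finally
`|u(b)² - u(a)²| = |u(b) - u(a)| |u(b) + u(a)|`, and Cauchy–Schwarz bounds the edge sum by
`‖∇u‖` times `4√d ‖u‖`.
-/

namespace Finset

variable {ι α β M : Type*}

theorem sum_le_sum_sum_of_forall_exists_mem [DecidableEq α] [AddCommMonoid M] [PartialOrder M]
    [IsOrderedAddMonoid M] {s : Finset α} {I : Finset ι} {t : ι → Finset α} {f : α → M}
    (hf : ∀ x, 0 ≤ f x) (hst : ∀ x ∈ s, ∃ i ∈ I, x ∈ t i) :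
    ∑ x ∈ s, f x ≤ ∑ i ∈ I, ∑ x ∈ t i, f x := by
  calc ∑ x ∈ s, f x ≤ ∑ x ∈ s, ∑ i ∈ I, if x ∈ t i then f x else 0 := by
        gcongr with x hx
        obtain ⟨i, hi, hxi⟩ := hst x hx
        have hsingle := single_le_sum (f := fun i => if x ∈ t i then f x else 0)
          (fun j _ => by split_ifs <;> simp [hf]) hi
        rwa [if_pos hxi] at hsingle
    _ = ∑ i ∈ I, ∑ x ∈ s ∩ t i, f x := by
        rw [sum_comm]
        simp only [sum_ite_mem]
    _ ≤ ∑ i ∈ I, ∑ x ∈ t i, f x :=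
        sum_le_sum fun i _ => sum_le_sum_of_subset_of_nonneg inter_subset_right fun x _ _ => hf x

theorem sum_comp_le_nsmul_sum_of_card_fiber_le [DecidableEq β] [AddCommMonoid M] [PartialOrder M]
    [IsOrderedAddMonoid M] {s : Finset α} {t : Finset β} {g : α → β} {f : β → M} {c : ℕ}
    (hf : ∀ y ∈ t, 0 ≤ f y) (hg : ∀ x ∈ s, g x ∈ t) (hc : ∀ y ∈ t, #{x ∈ s | g x = y} ≤ c) :
    ∑ x ∈ s, f (g x) ≤ c • ∑ y ∈ t, f y := by
  rw [← sum_fiberwise_of_maps_to hg, smul_sum]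
  gcongr with y hy
  rw [sum_congr rfl fun x hx => congrArg f (mem_filter.mp hx).2, sum_const]
  exact nsmul_le_nsmul_left (hf y hy) (hc y hy)

end Finset

section Rays

open Finset

theorem le_add_sum_range_abs_sub (f : ℕ → ℝ) {s n : ℕ} (hs : s ≤ n) :
    f 0 ≤ f s + ∑ r ∈ range n, |f (r + 1) - f r| := by
  have htel : f 0 - f s = ∑ r ∈ range s, (f r - f (r + 1)) :=
    (sum_range_sub' f s).symm
  have hle : ∑ r ∈ range s, (f r - f (r + 1)) ≤ ∑ r ∈ range n, |f (r + 1) - f r| :=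
    calc _ ≤ ∑ r ∈ range s, |f (r + 1) - f r| :=
          sum_le_sum fun r _ => (le_abs_self _).trans_eq (abs_sub_comm _ _)
      _ ≤ _ := sum_le_sum_of_subset_of_nonneg (range_subset_range.mpr hs)
          fun _ _ _ => abs_nonneg _
  linarith

theorem add_one_mul_le_sum_range_add (f : ℕ → ℝ) (n : ℕ) :
    (n + 1) * f 0 ≤ ∑ s ∈ range (n + 1), f s
      + (n + 1) * ∑ r ∈ range n, |f (r + 1) - f r| := by
  have := sum_le_sum fun s (hs : s ∈ range (n + 1)) =>
    le_add_sum_range_abs_sub f (Nat.lt_succ_iff.mp (mem_range.mp hs))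
  simpa [sum_add_distrib] using this

theorem sum_sq_le_of_card_ray_fiber_le {G : Type*} [AddMonoid G] [DecidableEq G]
    {S T : Finset G} {v : G} {n c : ℕ} (u : G → ℝ)
    (hray : ∀ x ∈ S, ∀ s ≤ n, x + s • v ∈ T)
    (hfib : ∀ y ∈ T, #{p ∈ S ×ˢ range (n + 1) | p.1 + p.2 • v = y} ≤ c) :
    ∑ x ∈ S, u x ^ 2 ≤ c / (n + 1) * ∑ y ∈ T, u y ^ 2
      + c * ∑ a ∈ T with a + v ∈ T, |u (a + v) ^ 2 - u a ^ 2| := by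
  set ray : G × ℕ → G := fun p => p.1 + p.2 • v
  have hray_succ : ∀ x r, ray (x, r) + v = ray (x, r + 1) := by
    simp [ray, succ_nsmul, add_assoc]
  have hpoint : ∀ x ∈ S, (n + 1) * u x ^ 2 ≤ ∑ s ∈ range (n + 1), u (ray (x, s)) ^ 2
      + (n + 1) * ∑ r ∈ range n, |u (ray (x, r) + v) ^ 2 - u (ray (x, r)) ^ 2| := by
    intro x _
    simpa [ray, hray_succ] using add_one_mul_le_sum_range_add (fun s => u (x + s • v) ^ 2) n
  have hfirst : ∑ p ∈ S ×ˢ range (n + 1), u (ray p) ^ 2 ≤ c * ∑ y ∈ T, u y ^ 2 := by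
    rw [← nsmul_eq_mul]
    refine sum_comp_le_nsmul_sum_of_card_fiber_le (fun y _ => sq_nonneg (u y)) ?_ hfib
    rintro ⟨x, s⟩ hp
    obtain ⟨hx, hs⟩ := mem_product.mp hp
    exact hray x hx s (Nat.lt_succ_iff.mp (mem_range.mp hs))
  have hsecond : ∑ p ∈ S ×ˢ range n, |u (ray p + v) ^ 2 - u (ray p) ^ 2|
      ≤ c * ∑ a ∈ T with a + v ∈ T, |u (a + v) ^ 2 - u a ^ 2| := by
    rw [← nsmul_eq_mul]
    refine sum_comp_le_nsmul_sum_of_card_fiber_le (g := ray)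
      (f := fun a => |u (a + v) ^ 2 - u a ^ 2|) (fun y _ => abs_nonneg _) ?_ ?_
    · rintro ⟨x, r⟩ hp
      obtain ⟨hx, hr⟩ := mem_product.mp hp
      have hr : r < n := mem_range.mp hr
      refine mem_filter.mpr ⟨hray x hx r hr.le, ?_⟩
      rw [hray_succ]
      exact hray x hx (r + 1) hr
    · intro y hy
      refine le_trans (card_le_card fun p hp => ?_) (hfib y (mem_filter.mp hy).1)
      simp only [mem_filter, mem_product, mem_range] at hp ⊢
      exact ⟨⟨hp.1.1, by omega⟩, hp.2⟩
  have hsum := sum_le_sum hpoint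
  rw [← mul_sum, sum_add_distrib, ← mul_sum, ← sum_product', ← sum_product'] at hsum
  simp only [Prod.mk.eta] at hsum
  have hn : (0 : ℝ) < n + 1 := by positivity
  have hsecond' := mul_le_mul_of_nonneg_left hsecond hn.le
  rw [div_mul_eq_mul_div, div_add' _ _ _ hn.ne', le_div_iff₀ hn]
  linarith

end Rays

section Cube

open Finset

variable {d m : ℕ}

def cubeRadius (m : ℕ) : ℕ := (3 ^ m - 1) / 2

theorem two_mul_cubeRadius_add_one (m : ℕ) : 2 * cubeRadius m + 1 = 3 ^ m := by
  obtain ⟨k, hk⟩ := (by decide : Odd 3).pow (n := m)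
  rw [cubeRadius, hk]
  omega

theorem mem_triCube_iff {x : Fin d → ℤ} :
    x ∈ triCube d m ↔ ∀ i, |x i| ≤ cubeRadius m := by
  have hR : ((3 : ℤ) ^ m - 1) / 2 = cubeRadius m := by
    have := two_mul_cubeRadius_add_one m
    zify at this
    omega
  simp only [triCube, mem_Icc, Pi.le_def, hR, abs_le, forall_and]

theorem add_zsmul_latUnit_mem_triCube_iff {x : Fin d → ℤ} (hx : x ∈ triCube d m) (j : Fin d)
    (c : ℤ) : x + c • latUnit d j ∈ triCube d m ↔ |x j + c| ≤ cubeRadius m := by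
  rw [mem_triCube_iff] at hx ⊢
  refine ⟨fun h => by simpa [latUnit] using h j, fun h i => ?_⟩
  by_cases hij : i = j
  · subst hij
    simpa [latUnit] using h
  · simpa [latUnit, hij] using hx i

theorem exists_abs_eq_cubeRadius_of_mem_triCubeBdry {y : Fin d → ℤ} (hy : y ∈ triCubeBdry d m) :
    ∃ j, |y j| = cubeRadius m := by
  simp only [triCubeBdry, triCubeInt, mem_sdiff, mem_filter, not_and, not_forall] at hy
  obtain ⟨hyC, hy⟩ := hy
  obtain ⟨j, hj⟩ := hy hyC
  have hyj := mem_triCube_iff.mp hyC j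
  rw [← one_smul ℤ (latUnit d j), sub_eq_add_neg, ← neg_smul,
    add_zsmul_latUnit_mem_triCube_iff hyC, add_zsmul_latUnit_mem_triCube_iff hyC] at hj
  refine ⟨j, ?_⟩
  simp only [abs_le] at hyj hj
  rcases abs_cases (y j) with ⟨h, _⟩ | ⟨h, _⟩ <;> rw [h] <;> omega

def cubeDirs (d : ℕ) : Finset (Fin d × ℤ) := univ ×ˢ {1, -1}

theorem card_cubeDirs : #(cubeDirs d) = 2 * d := by
  simp [cubeDirs, mul_comm]

/-- Points within `k` of the face `{x_j = -ε R}`; the rays from them go in direction `ε e_j`. -/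
noncomputable def cubeFaceSlab (d m : ℕ) (j : Fin d) (ε : ℤ) (k : ℕ) : Finset (Fin d → ℤ) :=
  {x ∈ triCube d m | ε * x j + cubeRadius m ≤ k}

theorem exists_mem_cubeFaceSlab {x y : Fin d → ℤ} {K : ℝ} (hx : x ∈ triCube d m)
    (hy : y ∈ triCubeBdry d m) (hxy : ∀ i, |(x i : ℝ) - y i| ≤ K) :
    ∃ p ∈ cubeDirs d, x ∈ cubeFaceSlab d m p.1 p.2 ⌊K⌋₊ := by
  obtain ⟨j, hyj⟩ := exists_abs_eq_cubeRadius_of_mem_triCubeBdry hy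
  have hxj : (cubeRadius m : ℤ) ≤ |x j| + ⌊K⌋₊ := by
    have hreal : (cubeRadius m : ℝ) < |(x j : ℝ)| + ⌊K⌋₊ + 1 := by
      have hyj' : |(y j : ℝ)| = cubeRadius m := by rw [← Int.cast_abs, hyj, Int.cast_natCast]
      linarith [abs_sub_abs_le_abs_sub (y j : ℝ) (x j), abs_sub_comm (x j : ℝ) (y j), hxy j,
        Nat.lt_floor_add_one K]
    exact_mod_cast Int.lt_add_one_iff.mp (by exact_mod_cast hreal)
  simp only [cubeDirs, cubeFaceSlab, mem_product, mem_univ, mem_insert, mem_singleton,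
    true_and, mem_filter, hx]
  rcases abs_cases (x j) with ⟨h, -⟩ | ⟨h, -⟩
  · exact ⟨(j, -1), Or.inr rfl, by dsimp only; omega⟩
  · exact ⟨(j, 1), Or.inl rfl, by dsimp only; omega⟩

theorem add_nsmul_mem_triCube_of_mem_cubeFaceSlab {j : Fin d} {ε : ℤ} {k s : ℕ}
    {x : Fin d → ℤ} (hε : ε = 1 ∨ ε = -1) (hk : k ≤ cubeRadius m)
    (hx : x ∈ cubeFaceSlab d m j ε k) (hs : s ≤ cubeRadius m) :
    x + s • ε • latUnit d j ∈ triCube d m := by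
  obtain ⟨hxC, hxk⟩ := mem_filter.mp hx
  have hxj := abs_le.mp (mem_triCube_iff.mp hxC j)
  rw [← smul_assoc, add_zsmul_latUnit_mem_triCube_iff hxC, nsmul_eq_mul, abs_le]
  rcases hε with rfl | rfl <;> constructor <;> omega

theorem card_cubeFaceSlab_ray_fiber_le {j : Fin d} {ε : ℤ} {k : ℕ} (hε : ε = 1 ∨ ε = -1)
    (y : Fin d → ℤ) :
    #{p ∈ cubeFaceSlab d m j ε k ×ˢ range (cubeRadius m + 1) |
      p.1 + p.2 • ε • latUnit d j = y} ≤ k + 1 := by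
  calc _ ≤ #(Icc (0 : ℤ) k) := by
        refine card_le_card_of_injOn (fun p => ε * p.1 j + cubeRadius m) (fun p hp => ?_) ?_
        · simp only [coe_filter, mem_product, cubeFaceSlab, mem_filter] at hp
          have hxj := abs_le.mp (mem_triCube_iff.mp hp.1.1.1 j)
          simp only [coe_Icc, Set.mem_Icc]
          refine ⟨?_, hp.1.1.2⟩
          rcases hε with rfl | rfl <;> omega
        · rintro ⟨x, s⟩ hp ⟨x', s'⟩ hp' hxx'
          simp only [coe_filter, mem_product, Set.mem_ofPred_eq] at hp hp' hxx'
          have hpath := hp.2.trans hp'.2.symm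
          have hj := congrFun hpath j
          simp [latUnit] at hj
          have hs : s = s' := by
            rcases hε with rfl | rfl <;>
              simp only [one_mul, mul_one, neg_one_mul, mul_neg] at hj hxx' <;> omega
          subst hs
          simp [add_right_cancel hpath]
    _ = k + 1 := by simp

theorem sum_sq_cubeFaceSlab_le {j : Fin d} {ε : ℤ} {k : ℕ} (hε : ε = 1 ∨ ε = -1)
    (hk : k ≤ cubeRadius m) (u : (Fin d → ℤ) → ℝ) :
    ∑ x ∈ cubeFaceSlab d m j ε k, u x ^ 2
      ≤ (k + 1) / (cubeRadius m + 1) * ∑ y ∈ triCube d m, u y ^ 2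
        + (k + 1) * ∑ a ∈ triCube d m with a + ε • latUnit d j ∈ triCube d m,
          |u (a + ε • latUnit d j) ^ 2 - u a ^ 2| := by
  exact_mod_cast sum_sq_le_of_card_ray_fiber_le u
    (fun x hx s hs => add_nsmul_mem_triCube_of_mem_cubeFaceSlab hε hk hx hs)
    (fun y _ => card_cubeFaceSlab_ray_fiber_le hε y)

noncomputable def cubeEdges (d m : ℕ) : Finset ((Fin d × ℤ) × (Fin d → ℤ)) :=
  {q ∈ cubeDirs d ×ˢ triCube d m | q.2 + q.1.2 • latUnit d q.1.1 ∈ triCube d m}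

theorem sum_cubeEdges (g : (Fin d × ℤ) × (Fin d → ℤ) → ℝ) :
    ∑ q ∈ cubeEdges d m, g q
      = ∑ p ∈ cubeDirs d, ∑ a ∈ triCube d m with a + p.2 • latUnit d p.1 ∈ triCube d m,
          g (p, a) := by
  simp only [cubeEdges, sum_filter, sum_product]

theorem sum_triCube_neighbours_eq_sum_cubeEdges (g : (Fin d → ℤ) → (Fin d → ℤ) → ℝ) :
    ∑ x ∈ triCube d m, ∑ j : Fin d,
      ((if x + latUnit d j ∈ triCube d m then g x (x + latUnit d j) else 0)
        + (if x - latUnit d j ∈ triCube d m then g x (x - latUnit d j) else 0))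
      = ∑ q ∈ cubeEdges d m, g q.2 (q.2 + q.1.2 • latUnit d q.1.1) := by
  rw [sum_cubeEdges, cubeDirs, sum_product, sum_comm]
  refine sum_congr rfl fun j _ => ?_
  rw [sum_pair (by decide), sum_add_distrib]
  simp only [sum_filter, one_smul, neg_smul, ← sub_eq_add_neg]

theorem sum_sq_cubeFaceSlabs_le {k : ℕ} (hk : k ≤ cubeRadius m) (u : (Fin d → ℤ) → ℝ) :
    ∑ p ∈ cubeDirs d, ∑ x ∈ cubeFaceSlab d m p.1 p.2 k, u x ^ 2
      ≤ 2 * d * ((k + 1) / (cubeRadius m + 1)) * ∑ y ∈ triCube d m, u y ^ 2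
        + (k + 1) * ∑ q ∈ cubeEdges d m,
          |u (q.2 + q.1.2 • latUnit d q.1.1) ^ 2 - u q.2 ^ 2| := by
  calc _ ≤ ∑ p ∈ cubeDirs d, ((k + 1) / (cubeRadius m + 1) * ∑ y ∈ triCube d m, u y ^ 2
        + (k + 1) * ∑ a ∈ triCube d m with a + p.2 • latUnit d p.1 ∈ triCube d m,
          |u (a + p.2 • latUnit d p.1) ^ 2 - u a ^ 2|) := by
        refine sum_le_sum fun p hp => sum_sq_cubeFaceSlab_le ?_ hk u
        simpa [cubeDirs] using hp
    _ = _ := by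
        rw [sum_add_distrib, sum_const, card_cubeDirs, ← mul_sum, sum_cubeEdges]
        push_cast
        ring

theorem sum_cubeEdges_sq_add_le (u : (Fin d → ℤ) → ℝ) :
    ∑ q ∈ cubeEdges d m, (u (q.2 + q.1.2 • latUnit d q.1.1) + u q.2) ^ 2
      ≤ 8 * d * ∑ y ∈ triCube d m, u y ^ 2 := by
  have hdirs :
      ∑ r ∈ cubeDirs d ×ˢ triCube d m, u r.2 ^ 2 = 2 * d * ∑ y ∈ triCube d m, u y ^ 2 := by
    rw [sum_product]
    simp only [sum_const, card_cubeDirs, nsmul_eq_mul]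
    push_cast
    ring
  have hstart : ∑ q ∈ cubeEdges d m, u q.2 ^ 2 ≤ 2 * d * ∑ y ∈ triCube d m, u y ^ 2 :=
    hdirs ▸ sum_le_sum_of_subset_of_nonneg (filter_subset _ _) fun _ _ _ => sq_nonneg _
  have hend : ∑ q ∈ cubeEdges d m, u (q.2 + q.1.2 • latUnit d q.1.1) ^ 2
      ≤ 2 * d * ∑ y ∈ triCube d m, u y ^ 2 := by
    rw [← hdirs, ← one_smul ℕ (∑ r ∈ cubeDirs d ×ˢ triCube d m, u r.2 ^ 2)]
    refine sum_comp_le_nsmul_sum_of_card_fiber_le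
      (g := fun q : (Fin d × ℤ) × (Fin d → ℤ) => (q.1, q.2 + q.1.2 • latUnit d q.1.1))
      (f := fun r : (Fin d × ℤ) × (Fin d → ℤ) => u r.2 ^ 2) (fun _ _ => sq_nonneg _)
      (fun q hq => ?_) fun r _ => ?_
    · simp only [cubeEdges, mem_filter, mem_product] at hq ⊢
      exact ⟨hq.1.1, hq.2⟩
    · refine card_le_one.mpr fun q hq q' hq' => ?_
      obtain ⟨h1, h2⟩ := Prod.mk.inj ((mem_filter.mp hq).2.trans (mem_filter.mp hq').2.symm)
      rw [h1] at h2
      exact Prod.ext h1 (add_right_cancel h2)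
  calc _ ≤ ∑ q ∈ cubeEdges d m,
        2 * (u (q.2 + q.1.2 • latUnit d q.1.1) ^ 2 + u q.2 ^ 2) := sum_le_sum fun _ _ => add_sq_le
    _ = 2 * (∑ q ∈ cubeEdges d m, u (q.2 + q.1.2 • latUnit d q.1.1) ^ 2
          + ∑ q ∈ cubeEdges d m, u q.2 ^ 2) := by rw [← sum_add_distrib, mul_sum]
    _ ≤ _ := by linarith

theorem sum_cubeEdges_abs_sq_sub_le (u : (Fin d → ℤ) → ℝ) :
    ∑ q ∈ cubeEdges d m, |u (q.2 + q.1.2 • latUnit d q.1.1) ^ 2 - u q.2 ^ 2|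
      ≤ 4 * (d + 1) * (√(∑ y ∈ triCube d m, u y ^ 2) *
        √((1 / 2) * ∑ q ∈ cubeEdges d m, (u (q.2 + q.1.2 • latUnit d q.1.1) - u q.2) ^ 2)) := by
  set Q := ∑ y ∈ triCube d m, u y ^ 2
  set D := ∑ q ∈ cubeEdges d m, (u (q.2 + q.1.2 • latUnit d q.1.1) - u q.2) ^ 2
  have hQ : 0 ≤ Q := sum_nonneg fun _ _ => sq_nonneg _
  have hD : 0 ≤ D := sum_nonneg fun _ _ => sq_nonneg _
  calc _ = ∑ q ∈ cubeEdges d m, |u (q.2 + q.1.2 • latUnit d q.1.1) - u q.2|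
        * |u (q.2 + q.1.2 • latUnit d q.1.1) + u q.2| := by
        simp only [← abs_mul, sq_sub_sq, mul_comm]
    _ ≤ √D * √(8 * d * Q) := by
        refine (Real.sum_mul_le_sqrt_mul_sqrt _ _ _).trans ?_
        simp only [sq_abs]
        gcongr
        exact sum_cubeEdges_sq_add_le u
    _ = √(16 * d * (Q * ((1 / 2) * D))) := by
        rw [← Real.sqrt_mul hD]
        ring_nf
    _ = 4 * √(d : ℝ) * (√Q * √((1 / 2) * D)) := by
        rw [Real.sqrt_mul (by positivity), Real.sqrt_mul (by positivity), Real.sqrt_mul hQ,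
          show (16 : ℝ) = 4 ^ 2 by norm_num, Real.sqrt_sq (by norm_num)]
    _ ≤ _ := by
        gcongr
        exact Real.sqrt_le_iff.mpr ⟨by positivity, by nlinarith⟩

theorem natFloor_le_cubeRadius {K : ℝ} (hK : K ≤ (3 : ℝ) ^ m / 4) : ⌊K⌋₊ ≤ cubeRadius m := by
  have hfloor : ⌊K⌋₊ ≤ 3 ^ m / 4 := by
    have := Nat.floor_mono hK
    rwa [show (3 : ℝ) ^ m = ((3 ^ m : ℕ) : ℝ) by push_cast; rfl,
      show (4 : ℝ) = ((4 : ℕ) : ℝ) by norm_num, Nat.floor_div_eq_div] at this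
  have := two_mul_cubeRadius_add_one m
  omega

theorem inv_cubeRadius_add_one_le (m : ℕ) :
    ((cubeRadius m : ℝ) + 1)⁻¹ ≤ 2 * ((3 : ℝ) ^ m)⁻¹ := by
  have h : 2 * (cubeRadius m : ℝ) + 1 = 3 ^ m := by exact_mod_cast two_mul_cubeRadius_add_one m
  rw [← h, ← div_eq_mul_inv]
  exact inv_le_of_inv_le₀ (by positivity) (by rw [inv_div]; linarith)

end Cube

/-- Discrete trace inequality: there is `C = C(d)` such that for every `m`,
every `u : □_m → ℝ`, and every `0 ≤ K ≤ 3^m/4`,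
`∑_{x ∈ □_m, dist(x,∂□_m) ≤ K} u(x)² ≤ C (K+1) (3^{−m} ‖u‖² + ‖u‖ ‖∇u‖)`,
with the ℓ^∞ distance and the cube Dirichlet energy. -/
theorem discrete_trace_inequality (d : ℕ) :
    ∃ C : ℝ, 0 < C ∧ ∀ m : ℕ, ∀ u : (Fin d → ℤ) → ℝ, ∀ K : ℝ,
      0 ≤ K → K ≤ (3:ℝ)^m / 4 →
      ∑ x ∈ (triCube d m).filter
          (fun x => ∃ y ∈ triCubeBdry d m, ∀ i : Fin d, |((x i : ℝ) - (y i : ℝ))| ≤ K),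
          (u x)^2
        ≤ C * (K + 1) *
          (((3:ℝ)^m)⁻¹ * ∑ x ∈ triCube d m, (u x)^2
            + Real.sqrt (∑ x ∈ triCube d m, (u x)^2) *
              Real.sqrt ((1/2) * ∑ x ∈ triCube d m, ∑ j : Fin d,
                ((if x + latUnit d j ∈ triCube d m then (u (x + latUnit d j) - u x)^2 else 0)
                  + (if x - latUnit d j ∈ triCube d m then (u (x - latUnit d j) - u x)^2 else 0)))) := by
  refine ⟨4 * (d + 1), by positivity, fun m u K hK0 hK => ?_⟩
  have hfloor : (⌊K⌋₊ : ℝ) + 1 ≤ K + 1 := by linarith [Nat.floor_le hK0]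
  rw [sum_triCube_neighbours_eq_sum_cubeEdges fun x y => (u y - u x) ^ 2]
  calc _ ≤ ∑ p ∈ cubeDirs d, ∑ x ∈ cubeFaceSlab d m p.1 p.2 ⌊K⌋₊, u x ^ 2 := by
        refine Finset.sum_le_sum_sum_of_forall_exists_mem (fun x => sq_nonneg (u x)) fun x hx => ?_
        obtain ⟨hxC, y, hy, hxy⟩ := Finset.mem_filter.mp hx
        exact exists_mem_cubeFaceSlab hxC hy hxy
    _ ≤ _ := sum_sq_cubeFaceSlabs_le (natFloor_le_cubeRadius hK) u
    _ ≤ 2 * (d + 1) * ((K + 1) * (2 * ((3 : ℝ) ^ m)⁻¹)) * ∑ y ∈ triCube d m, u y ^ 2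
        + (K + 1) * (4 * (d + 1) * (√(∑ y ∈ triCube d m, u y ^ 2) * √((1 / 2) *
          ∑ q ∈ cubeEdges d m, (u (q.2 + q.1.2 • latUnit d q.1.1) - u q.2) ^ 2))) := by
        rw [div_eq_mul_inv]
        gcongr
        · linarith
        · exact inv_cubeRadius_add_one_le m
        · exact sum_cubeEdges_abs_sq_sub_le u
    _ = _ := by ring
end

section
/- Product rule for the O_s calculus: if X, Y are nonnegative random variables with E[exp((X/θ₁)^{s₁})] ≤ 2 and E[exp((Y/θ₂)^{s₂})] ≤ 2 for s₁, s₂ > 0 and θ₁, θ₂ > 0, then E[exp((XY/(θ₁θ₂))^{s₁s₂/(s₁+s₂)})] ≤ 2. -/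
/-!
With `s = s₁s₂/(s₁+s₂)` and the weights `w₁ = s₂/(s₁+s₂)`, `w₂ = s₁/(s₁+s₂)`, weighted AM–GM gives
`(ab)^s = (a^{s₁})^{w₁} (b^{s₂})^{w₂} ≤ w₁ a^{s₁} + w₂ b^{s₂}`, and convexity of `exp` then gives
`exp((ab)^s) ≤ w₁ exp(a^{s₁}) + w₂ exp(b^{s₂})`. Integrating, the left side has integral at most
`2w₁ + 2w₂ = 2`.
-/

open MeasureTheory

namespace Real

theorem mul_rpow_le_weighted_add {a b s₁ s₂ : ℝ} (ha : 0 ≤ a) (hb : 0 ≤ b)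
    (hs₁ : 0 < s₁) (hs₂ : 0 < s₂) :
    (a * b) ^ (s₁ * s₂ / (s₁ + s₂)) ≤ s₂ / (s₁ + s₂) * a ^ s₁ + s₁ / (s₁ + s₂) * b ^ s₂ := by
  have hsum : 0 < s₁ + s₂ := add_pos hs₁ hs₂
  have hexp₁ : s₁ * s₂ / (s₁ + s₂) = s₁ * (s₂ / (s₁ + s₂)) := mul_div_assoc _ _ _
  have hexp₂ : s₁ * s₂ / (s₁ + s₂) = s₂ * (s₁ / (s₁ + s₂)) := by ring
  calc (a * b) ^ (s₁ * s₂ / (s₁ + s₂))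
      = (a ^ s₁) ^ (s₂ / (s₁ + s₂)) * (b ^ s₂) ^ (s₁ / (s₁ + s₂)) := by
        rw [mul_rpow ha hb, ← rpow_mul ha, ← rpow_mul hb, ← hexp₁, ← hexp₂]
    _ ≤ _ := geom_mean_le_arith_mean2_weighted (by positivity) (by positivity)
        (rpow_nonneg ha _) (rpow_nonneg hb _) (by field_simp; ring)

theorem exp_mul_rpow_le_weighted_add {a b s₁ s₂ : ℝ} (ha : 0 ≤ a) (hb : 0 ≤ b)
    (hs₁ : 0 < s₁) (hs₂ : 0 < s₂) :
    exp ((a * b) ^ (s₁ * s₂ / (s₁ + s₂))) ≤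
      s₂ / (s₁ + s₂) * exp (a ^ s₁) + s₁ / (s₁ + s₂) * exp (b ^ s₂) := by
  have hsum : 0 < s₁ + s₂ := add_pos hs₁ hs₂
  calc exp ((a * b) ^ (s₁ * s₂ / (s₁ + s₂)))
      ≤ exp (s₂ / (s₁ + s₂) * a ^ s₁ + s₁ / (s₁ + s₂) * b ^ s₂) :=
        exp_le_exp.2 (mul_rpow_le_weighted_add ha hb hs₁ hs₂)
    _ ≤ _ := convexOn_exp.2 (Set.mem_univ _) (Set.mem_univ _) (by positivity) (by positivity)
        (by field_simp; ring)

end Real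

theorem MeasureTheory.lintegral_le_of_le_convex_comb {Ω : Type*} [MeasurableSpace Ω]
    {μ : Measure Ω} {f g h : Ω → ENNReal} {a b c : ENNReal} (hg : Measurable g) (hab : a + b = 1)
    (hfgh : ∀ ω, f ω ≤ a * g ω + b * h ω) (hgc : ∫⁻ ω, g ω ∂μ ≤ c) (hhc : ∫⁻ ω, h ω ∂μ ≤ c) :
    ∫⁻ ω, f ω ∂μ ≤ c := by
  have ha : a ≠ ⊤ := ne_top_of_le_ne_top ENNReal.one_ne_top (hab ▸ le_self_add)
  have hb : b ≠ ⊤ := ne_top_of_le_ne_top ENNReal.one_ne_top (hab ▸ le_add_self)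
  calc ∫⁻ ω, f ω ∂μ ≤ ∫⁻ ω, a * g ω + b * h ω ∂μ := lintegral_mono hfgh
    _ = a * ∫⁻ ω, g ω ∂μ + b * ∫⁻ ω, h ω ∂μ := by
      rw [lintegral_add_left (hg.const_mul a), lintegral_const_mul' a g ha,
        lintegral_const_mul' b h hb]
    _ ≤ a * c + b * c := by gcongr
    _ = c := by rw [← add_mul, hab, one_mul]

theorem Os_product_rule_general {Ω : Type*} [MeasurableSpace Ω]
    (μ : Measure Ω)
    (X Y : Ω → ℝ) (hXm : Measurable X)
    (hX0 : ∀ ω, 0 ≤ X ω) (hY0 : ∀ ω, 0 ≤ Y ω)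
    (s₁ s₂ θ₁ θ₂ : ℝ) (hs₁ : 0 < s₁) (hs₂ : 0 < s₂) (hθ₁ : 0 < θ₁) (hθ₂ : 0 < θ₂)
    (hX : ∫⁻ ω, ENNReal.ofReal (Real.exp ((X ω / θ₁) ^ s₁)) ∂μ ≤ 2)
    (hY : ∫⁻ ω, ENNReal.ofReal (Real.exp ((Y ω / θ₂) ^ s₂)) ∂μ ≤ 2) :
    ∫⁻ ω, ENNReal.ofReal (Real.exp ((X ω * Y ω / (θ₁ * θ₂)) ^ (s₁ * s₂ / (s₁ + s₂)))) ∂μ ≤ 2 := by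
  have hsum : 0 < s₁ + s₂ := add_pos hs₁ hs₂
  refine lintegral_le_of_le_convex_comb (a := ENNReal.ofReal (s₂ / (s₁ + s₂)))
    (b := ENNReal.ofReal (s₁ / (s₁ + s₂))) (by fun_prop) ?_ (fun ω => ?_) hX hY
  · rw [← ENNReal.ofReal_add (by positivity) (by positivity), ← add_div, add_comm,
      div_self hsum.ne', ENNReal.ofReal_one]
  · rw [← ENNReal.ofReal_mul (by positivity), ← ENNReal.ofReal_mul (by positivity),
      ← ENNReal.ofReal_add (by positivity) (by positivity), ← div_mul_div_comm]
    exact ENNReal.ofReal_le_ofReal <| Real.exp_mul_rpow_le_weighted_add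
      (div_nonneg (hX0 ω) hθ₁.le) (div_nonneg (hY0 ω) hθ₂.le) hs₁ hs₂

/-- Product rule for the `O_s` calculus: if `X, Y ≥ 0` satisfy
`E[exp((X/θ₁)^{s₁})] ≤ 2` and `E[exp((Y/θ₂)^{s₂})] ≤ 2`, then
`E[exp((XY/(θ₁θ₂))^{s₁s₂/(s₁+s₂)})] ≤ 2`. -/
theorem Os_product_rule {Ω : Type*} [MeasurableSpace Ω]
    (μ : Measure Ω) [IsProbabilityMeasure μ]
    (X Y : Ω → ℝ) (hXm : Measurable X) (hYm : Measurable Y)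
    (hX0 : ∀ ω, 0 ≤ X ω) (hY0 : ∀ ω, 0 ≤ Y ω)
    (s₁ s₂ θ₁ θ₂ : ℝ) (hs₁ : 0 < s₁) (hs₂ : 0 < s₂) (hθ₁ : 0 < θ₁) (hθ₂ : 0 < θ₂)
    (hX : ∫⁻ ω, ENNReal.ofReal (Real.exp ((X ω / θ₁) ^ s₁)) ∂μ ≤ 2)
    (hY : ∫⁻ ω, ENNReal.ofReal (Real.exp ((Y ω / θ₂) ^ s₂)) ∂μ ≤ 2) :
    ∫⁻ ω, ENNReal.ofReal (Real.exp ((X ω * Y ω / (θ₁ * θ₂)) ^ (s₁ * s₂ / (s₁ + s₂)))) ∂μ ≤ 2 :=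
  Os_product_rule_general μ X Y hXm hX0 hY0 s₁ s₂ θ₁ θ₂ hs₁ hs₂ hθ₁ hθ₂ hX hY
end

section
/- Sum rule for the O_s calculus with s ≥ 1: let (E, 𝒮, m) be a measure space and {X(z)}_{z∈E} a measurable family of random variables with X(z) ≤ O_s(θ(z)) for every z, where s ≥ 1 and θ : E → (0,∞) is integrable. Then ∫_E X(z) m(dz) ≤ O_s(∫_E θ(z) m(dz)), i.e. E[exp((max(∫X dm / ∫θ dm, 0))^s)] ≤ 2. -/
open MeasureTheory Set
open scoped NNReal ENNReal

/-!
Under the probability measure `ν = θ dm / ∫ θ dm` one has `∫ X dm / ∫ θ dm = ∫ (X / θ) dν`.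
Jensen's inequality for the convex function `t ↦ exp (max t 0 ^ s)` therefore bounds the
integrand at each `ω` by `∫ exp (max (X / θ) 0 ^ s) dν`; after exchanging the order of
integration (Tonelli), each inner expectation is at most `2`.
-/

theorem image_max_zero_univ : (fun t : ℝ => max t 0) '' univ = Ici 0 := by
  ext y
  simp only [image_univ, mem_range, mem_Ici]
  exact ⟨fun ⟨t, ht⟩ => ht ▸ le_max_right t 0, fun hy => ⟨y, max_eq_left hy⟩⟩

theorem convexOn_max_zero_rpow {s : ℝ} (hs : 1 ≤ s) :
    ConvexOn ℝ univ fun t : ℝ => max t 0 ^ s := by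
  refine ConvexOn.comp (g := fun x : ℝ => x ^ s) ?_
    ((convexOn_id convex_univ).sup (convexOn_const 0 convex_univ)) ?_ <;> rw [image_max_zero_univ]
  · exact convexOn_rpow hs
  · exact fun a ha b _ hab => Real.rpow_le_rpow ha hab (by linarith)

theorem image_max_zero_rpow_univ {s : ℝ} (hs : s ≠ 0) :
    (fun t : ℝ => max t 0 ^ s) '' univ = Ici 0 := by
  ext y
  simp only [image_univ, mem_range, mem_Ici]
  refine ⟨fun ⟨t, ht⟩ => ht ▸ by positivity, fun hy => ⟨y ^ s⁻¹, ?_⟩⟩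
  rw [max_eq_left (by positivity), Real.rpow_inv_rpow hy hs]

theorem convexOn_exp_max_zero_rpow {s : ℝ} (hs : 1 ≤ s) :
    ConvexOn ℝ univ fun t : ℝ => Real.exp (max t 0 ^ s) := by
  refine ConvexOn.comp (g := Real.exp) ?_ (convexOn_max_zero_rpow hs) ?_ <;>
    rw [image_max_zero_rpow_univ (by positivity)]
  · exact convexOn_exp.subset (subset_univ _) (convex_Ici 0)
  · exact Real.exp_monotone.monotoneOn _

theorem continuous_exp_max_zero_rpow {s : ℝ} (hs : 0 ≤ s) :
    Continuous fun t : ℝ => Real.exp (max t 0 ^ s) :=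
  Real.continuous_exp.comp <|
    (continuous_id.max continuous_const).rpow_const fun _ => Or.inr hs

section Jensen

variable {α : Type*} [MeasurableSpace α] {ν : Measure α} [IsProbabilityMeasure ν] {φ : ℝ → ℝ}

theorem ofReal_map_integral_le_lintegral (hφ : ConvexOn ℝ univ φ) (hφc : Continuous φ)
    (hφ0 : ∀ t, 0 ≤ φ t) {g : α → ℝ} (hg : Integrable g ν) :
    ENNReal.ofReal (φ (∫ x, g x ∂ν)) ≤ ∫⁻ x, ENNReal.ofReal (φ (g x)) ∂ν := by
  by_cases htop : ∫⁻ x, ENNReal.ofReal (φ (g x)) ∂ν = ∞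
  · simp [htop]
  have hφg_nonneg : 0 ≤ᵐ[ν] fun x => φ (g x) := ae_of_all _ fun x => hφ0 (g x)
  have hφg : Integrable (fun x => φ (g x)) ν :=
    ⟨hφc.comp_aestronglyMeasurable hg.1,
      (hasFiniteIntegral_iff_ofReal hφg_nonneg).2 (lt_top_iff_ne_top.2 htop)⟩
  calc ENNReal.ofReal (φ (∫ x, g x ∂ν))
      ≤ ENNReal.ofReal (∫ x, φ (g x) ∂ν) := ENNReal.ofReal_le_ofReal <|
        hφ.map_integral_le hφc.continuousOn isClosed_univ (ae_of_all _ fun _ => mem_univ _) hg hφg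
    _ = ∫⁻ x, ENNReal.ofReal (φ (g x)) ∂ν := ofReal_integral_eq_lintegral_ofReal hφg hφg_nonneg

theorem lintegral_ofReal_map_integral_le {Ω : Type*} [MeasurableSpace Ω] {μ : Measure Ω}
    [SFinite μ] (hφ : ConvexOn ℝ univ φ) (hφc : Continuous φ) (hφ0 : ∀ t, 0 ≤ φ t)
    {g : α → Ω → ℝ} (hgm : AEMeasurable (Function.uncurry g) (ν.prod μ))
    (hgi : ∀ ω, Integrable (fun z => g z ω) ν) {C : ℝ≥0∞}
    (hC : ∀ z, ∫⁻ ω, ENNReal.ofReal (φ (g z ω)) ∂μ ≤ C) :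
    ∫⁻ ω, ENNReal.ofReal (φ (∫ z, g z ω ∂ν)) ∂μ ≤ C :=
  calc ∫⁻ ω, ENNReal.ofReal (φ (∫ z, g z ω ∂ν)) ∂μ
      ≤ ∫⁻ ω, ∫⁻ z, ENNReal.ofReal (φ (g z ω)) ∂ν ∂μ :=
        lintegral_mono fun ω => ofReal_map_integral_le_lintegral hφ hφc hφ0 (hgi ω)
    _ = ∫⁻ z, ∫⁻ ω, ENNReal.ofReal (φ (g z ω)) ∂μ ∂ν := lintegral_lintegral_swap <|
        (ENNReal.continuous_ofReal.comp hφc).measurable.comp_aemeasurable hgm.prod_swap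
    _ ≤ ∫⁻ _, C ∂ν := lintegral_mono hC
    _ = C := by simp

end Jensen

section NormalizedDensity

variable {E : Type*} [MeasurableSpace E] {m : Measure E} {θ : E → ℝ}

noncomputable def normalizedWithDensity (m : Measure E) (θ : E → ℝ) : Measure E :=
  m.withDensity fun z => ENNReal.ofReal (θ z / ∫ z, θ z ∂m)

theorem isProbabilityMeasure_normalizedWithDensity (hθ0 : ∀ z, 0 ≤ θ z) (hθ : Integrable θ m)
    (hT : ∫ z, θ z ∂m ≠ 0) : IsProbabilityMeasure (normalizedWithDensity m θ) := by
  constructor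
  rw [normalizedWithDensity, withDensity_apply _ MeasurableSet.univ, setLIntegral_univ,
    ← ofReal_integral_eq_lintegral_ofReal (hθ.div_const _)
      (ae_of_all _ fun z => div_nonneg (hθ0 z) (integral_nonneg hθ0)),
    integral_div, div_self hT, ENNReal.ofReal_one]

theorem toNNReal_div_integral_smul_div (hθ : ∀ z, 0 < θ z) (X : E → ℝ) (z : E) :
    (θ z / ∫ z, θ z ∂m).toNNReal • (X z / θ z) = X z / ∫ z, θ z ∂m := by
  rw [NNReal.smul_def, smul_eq_mul,
    Real.coe_toNNReal _ (div_nonneg (hθ z).le (integral_nonneg fun z => (hθ z).le)),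
    div_mul_div_comm, mul_comm (θ z), mul_div_mul_right _ _ (hθ z).ne']

theorem integrable_div_normalizedWithDensity (hθ : ∀ z, 0 < θ z) (hθm : AEMeasurable θ m)
    {X : E → ℝ} (hX : Integrable X m) :
    Integrable (fun z => X z / θ z) (normalizedWithDensity m θ) := by
  refine (integrable_withDensity_iff_integrable_smul₀ (hθm.div_const _).real_toNNReal).2 ?_
  simp only [toNNReal_div_integral_smul_div hθ]
  exact hX.div_const _

theorem integral_div_normalizedWithDensity (hθ : ∀ z, 0 < θ z) (hθm : AEMeasurable θ m)
    (X : E → ℝ) :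
    ∫ z, X z / θ z ∂normalizedWithDensity m θ = (∫ z, X z ∂m) / ∫ z, θ z ∂m := by
  refine (integral_withDensity_eq_integral_smul₀ (hθm.div_const _).real_toNNReal _).trans ?_
  simp only [toNNReal_div_integral_smul_div hθ]
  exact integral_div _ _

end NormalizedDensity

/-- Sum rule for the `O_s` calculus with `s ≥ 1`: if `X(z) ≤ O_s(θ(z))` for every
`z` in a measure space `(E, m)` with `θ > 0` integrable, then
`∫_E X(z) m(dz) ≤ O_s(∫_E θ(z) m(dz))`. -/
theorem Os_sum_rule {Ω E : Type*} [MeasurableSpace Ω] [MeasurableSpace E]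
    (μ : Measure Ω) [IsProbabilityMeasure μ] (m : Measure E)
    (s : ℝ) (hs : 1 ≤ s)
    (X : E → Ω → ℝ) (θ : E → ℝ)
    (hXmeas : Measurable (Function.uncurry X))
    (hθpos : ∀ z, 0 < θ z) (hθint : Integrable θ m)
    (hXint : ∀ ω, Integrable (fun z => X z ω) m)
    (hX : ∀ z, ∫⁻ ω, ENNReal.ofReal (Real.exp (max (X z ω / θ z) 0 ^ s)) ∂μ ≤ 2) :
    ∫⁻ ω, ENNReal.ofReal
        (Real.exp (max ((∫ z, X z ω ∂m) / (∫ z, θ z ∂m)) 0 ^ s)) ∂μ ≤ 2 := by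
  rcases (integral_nonneg fun z => (hθpos z).le : 0 ≤ ∫ z, θ z ∂m).eq_or_lt with hT | hT
  -- `x / 0 = 0`, so the integrand is `exp 0 = 1`.
  · simp [← hT, Real.zero_rpow (by positivity : s ≠ 0)]
  have hθm := hθint.aemeasurable
  have := isProbabilityMeasure_normalizedWithDensity (fun z => (hθpos z).le) hθint hT.ne'
  have hθν : AEMeasurable θ (normalizedWithDensity m θ) :=
    hθm.mono_ac (withDensity_absolutelyContinuous _ _)
  simp_rw [← integral_div_normalizedWithDensity hθpos hθm]
  exact lintegral_ofReal_map_integral_le (convexOn_exp_max_zero_rpow hs)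
    (continuous_exp_max_zero_rpow (by linarith)) (fun _ => (Real.exp_pos _).le)
    (hXmeas.aemeasurable.div hθν.comp_fst)
    (fun ω => integrable_div_normalizedWithDensity hθpos hθm (hXint ω)) hX
end

section
/- Maximum rule for the O_s calculus: there is a constant depending only on s such that for every N ≥ 1 and random variables X_1, …, X_N each satisfying X_i ≤ O_s(1), one has max_{1≤i≤N} X_i ≤ O_s((log(2N)/log(3/2))^{1/s}), i.e. E[exp((max_i X_i / (log(2N)/log(3/2))^{1/s})_+^s)] ≤ 2. -/
/-!
Let `M = max_i X_i`, `c = log (2N) / log (3/2) ≥ 1` and `θ = c^{1/s}`, so that `θ^s = c`. Then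
`exp ((M/θ)_+^s) = (exp (M_+^s))^{1/c}`, and since `t ↦ t^{1/c}` is concave, Jensen's inequality
gives `E[exp ((M/θ)_+^s)] ≤ (E[exp (M_+^s)])^{1/c}`. The maximum is attained at some `X_i`, so
`E[exp (M_+^s)] ≤ ∑_i E[exp ((X_i)_+^s)] ≤ 2N`, and `c` is chosen so that `(2N)^{1/c} = 3/2 ≤ 2`.
-/

open MeasureTheory

noncomputable def expPosRpow (s x : ℝ) : ENNReal :=
  ENNReal.ofReal (Real.exp (max x 0 ^ s))

theorem measurable_expPosRpow (s : ℝ) : Measurable (expPosRpow s) := by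
  unfold expPosRpow
  fun_prop

theorem expPosRpow_div (s : ℝ) {θ : ℝ} (hθ : 0 < θ) (x : ℝ) :
    expPosRpow s (x / θ) = expPosRpow s x ^ (θ ^ s)⁻¹ := by
  have hmax : max (x / θ) 0 = max x 0 / θ := by rw [← max_div_div_right hθ.le, zero_div]
  rw [expPosRpow, expPosRpow, hmax, Real.div_rpow (le_max_right _ _) hθ.le, div_eq_mul_inv,
    Real.exp_mul, ENNReal.ofReal_rpow_of_pos (Real.exp_pos _)]

theorem lintegral_rpow_le_rpow_lintegral {α : Type*} [MeasurableSpace α] {μ : Measure α}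
    [IsProbabilityMeasure μ] {f : α → ENNReal} (hf : AEMeasurable f μ) {p : ℝ} (hp0 : 0 ≤ p)
    (hp1 : p ≤ 1) : ∫⁻ a, f a ^ p ∂μ ≤ (∫⁻ a, f a ∂μ) ^ p := by
  simpa using ENNReal.lintegral_mul_norm_pow_le hf (aemeasurable_const (b := 1)) hp0
    (sub_nonneg.2 hp1) (add_sub_cancel p 1)

theorem lintegral_comp_iSup_le_sum {Ω ι : Type*} [MeasurableSpace Ω] {μ : Measure Ω}
    [Fintype ι] [Nonempty ι] {g : ℝ → ENNReal} (hg : Measurable g) {X : ι → Ω → ℝ}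
    (hX : ∀ i, Measurable (X i)) :
    ∫⁻ ω, g (⨆ i, X i ω) ∂μ ≤ ∑ i, ∫⁻ ω, g (X i ω) ∂μ := by
  rw [← lintegral_finsetSum (f := fun i ω => g (X i ω)) _ fun i _ => hg.comp (hX i)]
  refine lintegral_mono fun ω => ?_
  obtain ⟨j, hj⟩ := exists_eq_ciSup_of_finite (f := fun i => X i ω)
  rw [← hj]
  exact Finset.single_le_sum (f := fun i => g (X i ω)) (fun i _ => zero_le)
    (Finset.mem_univ j)

/-- Maximum rule for the `O_s` calculus: for `N = n+1 ≥ 1` random variables with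
`X_i ≤ O_s(1)`, one has `max_i X_i ≤ O_s((log(2N)/log(3/2))^{1/s})`. -/
theorem Os_max_rule {Ω : Type*} [MeasurableSpace Ω]
    (μ : Measure Ω) [IsProbabilityMeasure μ]
    (s : ℝ) (hs : 0 < s) (n : ℕ) (X : Fin (n + 1) → Ω → ℝ)
    (hXm : ∀ i, Measurable (X i))
    (hX : ∀ i, ∫⁻ ω, ENNReal.ofReal (Real.exp (max (X i ω) 0 ^ s)) ∂μ ≤ 2) :
    ∫⁻ ω, ENNReal.ofReal
        (Real.exp (max ((⨆ i, X i ω) /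
          ((Real.log (2 * (n + 1 : ℝ)) / Real.log (3/2)) ^ ((1:ℝ)/s))) 0 ^ s)) ∂μ ≤ 2 := by
  set N : ℝ := 2 * (n + 1 : ℝ)
  set c : ℝ := Real.log N / Real.log (3/2)
  have hN : 3/2 < N := by simp only [N]; linarith [(Nat.cast_nonneg n : (0:ℝ) ≤ n)]
  have hc : 1 ≤ c :=
    (one_le_div (Real.log_pos (by norm_num))).2 (Real.log_le_log (by norm_num) hN.le)
  have hc0 : 0 < c := zero_lt_one.trans_le hc
  have hθ : (c ^ (1 / s)) ^ s = c := by
    rw [← Real.rpow_mul hc0.le, one_div_mul_cancel hs.ne', Real.rpow_one]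
  have hsum : ∑ _i : Fin (n + 1), (2 : ENNReal) = ENNReal.ofReal N := by
    simp only [N, Finset.sum_const, Finset.card_univ, Fintype.card_fin, nsmul_eq_mul]
    rw [ENNReal.ofReal_mul zero_le_two, mul_comm]
    norm_cast
  have hN_pow : N ^ c⁻¹ = 3 / 2 := by
    rw [inv_div, Real.log_div_log, Real.rpow_logb (by linarith) (by linarith) (by norm_num)]
  calc ∫⁻ ω, expPosRpow s ((⨆ i, X i ω) / c ^ (1 / s)) ∂μ
      = ∫⁻ ω, expPosRpow s (⨆ i, X i ω) ^ c⁻¹ ∂μ := by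
        simp_rw [expPosRpow_div s (Real.rpow_pos_of_pos hc0 (1 / s)), hθ]
    _ ≤ (∫⁻ ω, expPosRpow s (⨆ i, X i ω) ∂μ) ^ c⁻¹ :=
        lintegral_rpow_le_rpow_lintegral
          ((measurable_expPosRpow s).comp (Measurable.iSup hXm)).aemeasurable
          (by positivity) (inv_le_one_of_one_le₀ hc)
    _ ≤ (∑ i, ∫⁻ ω, expPosRpow s (X i ω) ∂μ) ^ c⁻¹ := by
        gcongr
        exact lintegral_comp_iSup_le_sum (measurable_expPosRpow s) hXm
    _ ≤ (∑ _i : Fin (n + 1), (2 : ENNReal)) ^ c⁻¹ := by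
        gcongr
        exact hX _
    _ ≤ 2 := by
        rw [hsum, ENNReal.ofReal_rpow_of_pos (by linarith), hN_pow]
        exact ENNReal.ofReal_le_of_le_toReal (by norm_num)
end
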